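/- For every integer k ≥ 0 and every odd integer n ≥ 1: I_{n,k} > 0 if n ≡ 1 (mod 4), and I_{n,k} < 0 if n ≡ 3 (mod 4). -/

import Mathlib

/-!
Two integrations by parts give, for odd `n` (so that `cos (n π / 2) = 0`),
`n² I_{n,k} = (2k+1) ((π/2)^{2k} sin (n π / 2) - 2k ∫₀^{π/2} t^{2k-1} sin (n t) dt)`.
Since `|sin (n t)| ≤ 1`, with strict inequality near `t = 0`, the last term is strictly smaller
in absolute value than `2k ∫₀^{π/2} t^{2k-1} dt = (π/2)^{2k}`, so the sign of `I_{n,k}` is that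
of `sin (n π / 2) = ±1`.
-/

open Real MeasureTheory

/-- `I_{n,k} = ∫₀^{π/2} t^{2k+1} sin(nt) dt`. -/
noncomputable def I (n k : ℕ) : ℝ :=
  ∫ t in (0:ℝ)..(π / 2), t ^ (2 * k + 1) * Real.sin ((n : ℝ) * t)

open Set

section

variable {a : ℝ}

theorem exists_abs_sin_mul_lt_one (ha : 0 < a) (ω : ℝ) :
    ∃ c ∈ Ioc 0 a, |sin (ω * c)| < 1 := by
  set c := min a (1 / (2 * |ω| + 1))
  have hc : 0 < c := lt_min ha (by positivity)
  refine ⟨c, ⟨hc, min_le_left _ _⟩, ?_⟩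
  calc |sin (ω * c)| ≤ |ω| * c := by
        simpa [abs_mul, abs_of_pos hc] using abs_sin_le_abs (x := ω * c)
    _ ≤ |ω| * (1 / (2 * |ω| + 1)) := by gcongr; exact min_le_right _ _
    _ < 1 := by
        rw [mul_one_div, div_lt_one (by positivity)]
        linarith [abs_nonneg ω]

theorem integral_pow_mul_mul_sin_lt (ha : 0 < a) {s : ℝ} (hs : |s| ≤ 1) (j : ℕ) (ω : ℝ) :
    ∫ t in (0:ℝ)..a, t ^ j * (s * sin (ω * t)) < ∫ t in (0:ℝ)..a, t ^ j := by
  have hle : ∀ x, s * sin (ω * x) ≤ 1 := fun x =>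
    (le_abs_self _).trans (by rw [abs_mul]; exact mul_le_one₀ hs (abs_nonneg _) (abs_sin_le_one _))
  obtain ⟨c, hc, hc1⟩ := exists_abs_sin_mul_lt_one ha ω
  refine intervalIntegral.integral_lt_integral_of_continuousOn_of_le_of_exists_lt ha
    (by fun_prop) (by fun_prop)
    (fun x hx => mul_le_of_le_one_right (pow_nonneg hx.1.le _) (hle x))
    ⟨c, Ioc_subset_Icc_self hc, ?_⟩
  have hlt : s * sin (ω * c) < 1 := (le_abs_self _).trans_lt (by
    rw [abs_mul]; exact (mul_le_of_le_one_left (abs_nonneg _) hs).trans_lt hc1)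
  exact mul_lt_of_lt_one_right (pow_pos hc.1 _) hlt

theorem abs_integral_pow_mul_sin_lt (ha : 0 < a) (j : ℕ) (ω : ℝ) :
    |∫ t in (0:ℝ)..a, t ^ j * sin (ω * t)| < a ^ (j + 1) / (j + 1) := by
  have hpow : ∫ t in (0:ℝ)..a, t ^ j = a ^ (j + 1) / (j + 1) := by simp [integral_pow]
  have hpos := integral_pow_mul_mul_sin_lt ha (s := 1) (by simp) j ω
  have hneg := integral_pow_mul_mul_sin_lt ha (s := -1) (by simp) j ω
  simp only [one_mul, neg_one_mul, mul_neg, intervalIntegral.integral_neg] at hpos hneg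
  rw [abs_lt]; constructor <;> linarith

theorem abs_natCast_mul_integral_pow_pred_mul_sin_lt (ha : 0 < a) (m : ℕ) (ω : ℝ) :
    |m * ∫ t in (0:ℝ)..a, t ^ (m - 1) * sin (ω * t)| < a ^ m := by
  rcases m with _ | j
  · simp
  · have h := abs_integral_pow_mul_sin_lt ha j ω
    rw [abs_mul, Nat.abs_cast, Nat.add_sub_cancel, Nat.cast_succ]
    rwa [lt_div_iff₀ (by positivity), mul_comm] at h

theorem mul_integral_pow_mul_cos (a ω : ℝ) (m : ℕ) :
    ω * ∫ t in (0:ℝ)..a, t ^ m * cos (ω * t) =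
      a ^ m * sin (ω * a) - m * ∫ t in (0:ℝ)..a, t ^ (m - 1) * sin (ω * t) := by
  have hsin : ∀ x, HasDerivAt (fun t => sin (ω * t)) (ω * cos (ω * x)) x := fun x =>
    ((hasDerivAt_id x).const_mul ω).sin.congr_deriv (by simp [mul_comm])
  have hparts := intervalIntegral.integral_mul_deriv_eq_deriv_mul
    (fun x _ => hasDerivAt_pow m x) (fun x _ => hsin x)
    ((by fun_prop : Continuous _).intervalIntegrable 0 a)
    ((by fun_prop : Continuous _).intervalIntegrable 0 a)
  rw [← intervalIntegral.integral_const_mul, ← intervalIntegral.integral_const_mul]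
  simp only [mul_left_comm ω, hparts, mul_assoc, mul_zero, sin_zero, sub_zero]

theorem mul_integral_pow_succ_mul_sin (a ω : ℝ) (m : ℕ) :
    ω * ∫ t in (0:ℝ)..a, t ^ (m + 1) * sin (ω * t) =
      -(a ^ (m + 1) * cos (ω * a)) + (m + 1) * ∫ t in (0:ℝ)..a, t ^ m * cos (ω * t) := by
  have hcos : ∀ x, HasDerivAt (fun t => -cos (ω * t)) (ω * sin (ω * x)) x := fun x =>
    ((hasDerivAt_id x).const_mul ω).cos.neg.congr_deriv (by simp [mul_comm])
  have hparts := intervalIntegral.integral_mul_deriv_eq_deriv_mul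
    (fun x _ => hasDerivAt_pow (m + 1) x) (fun x _ => hcos x)
    ((by fun_prop : Continuous _).intervalIntegrable 0 a)
    ((by fun_prop : Continuous _).intervalIntegrable 0 a)
  rw [← intervalIntegral.integral_const_mul, ← intervalIntegral.integral_const_mul]
  simp only [mul_left_comm ω, hparts, mul_assoc, Nat.add_sub_cancel, Nat.cast_succ, mul_neg,
    intervalIntegral.integral_neg, ne_eq, Nat.succ_ne_zero, not_false_eq_true, zero_pow, zero_mul]
  ring

theorem abs_mul_integral_pow_mul_cos_sub_lt (ha : 0 < a) (ω : ℝ) (m : ℕ) :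
    |ω * (∫ t in (0:ℝ)..a, t ^ m * cos (ω * t)) - a ^ m * sin (ω * a)| < a ^ m := by
  rw [mul_integral_pow_mul_cos, sub_sub_cancel_left, abs_neg]
  exact abs_natCast_mul_integral_pow_pred_mul_sin_lt ha m ω

theorem pos_sin_mul_mul_integral_pow_mul_cos (ha : 0 < a) {ω : ℝ} (hcos : cos (ω * a) = 0)
    (m : ℕ) : 0 < sin (ω * a) * (ω * ∫ t in (0:ℝ)..a, t ^ m * cos (ω * t)) := by
  have hsq : sin (ω * a) ^ 2 = 1 := by simpa [hcos] using sin_sq_add_cos_sq (ω * a)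
  have habs : |sin (ω * a)| = 1 :=
    (pow_eq_one_iff_of_nonneg (abs_nonneg _) two_ne_zero).mp (by rw [sq_abs, hsq])
  have hX := abs_mul_integral_pow_mul_cos_sub_lt ha ω m
  set X := ω * ∫ t in (0:ℝ)..a, t ^ m * cos (ω * t)
  calc 0 < a ^ m - |sin (ω * a) * (X - a ^ m * sin (ω * a))| := by
        rw [abs_mul, habs, one_mul]; linarith
    _ ≤ a ^ m + sin (ω * a) * (X - a ^ m * sin (ω * a)) := by
        linarith [neg_abs_le (sin (ω * a) * (X - a ^ m * sin (ω * a)))]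
    _ = sin (ω * a) * X := by linear_combination (-a ^ m) * hsq

theorem pos_sin_mul_integral_pow_succ_mul_sin (ha : 0 < a) {ω : ℝ} (hcos : cos (ω * a) = 0)
    (m : ℕ) : 0 < sin (ω * a) * ∫ t in (0:ℝ)..a, t ^ (m + 1) * sin (ω * t) := by
  have h := mul_pos (Nat.cast_add_one_pos m) (pos_sin_mul_mul_integral_pow_mul_cos ha hcos m)
  have hparts := mul_integral_pow_succ_mul_sin a ω m
  rw [hcos, mul_zero, neg_zero, zero_add] at hparts
  refine pos_of_mul_pos_right (a := ω ^ 2) (h.trans_eq ?_) (sq_nonneg ω)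
  linear_combination (-(sin (ω * a) * ω)) * hparts

end

theorem sin_natCast_mul_pi_div_two_of_mod_four_eq_one {n : ℕ} (h : n % 4 = 1) :
    sin (n * (π / 2)) = 1 := by
  obtain ⟨j, rfl⟩ : ∃ j, n = 4 * j + 1 := ⟨n / 4, by omega⟩
  rw [show ((4 * j + 1 : ℕ) : ℝ) * (π / 2) = π / 2 + j * (2 * π) by push_cast; ring,
    sin_add_nat_mul_two_pi, sin_pi_div_two]

theorem sin_natCast_mul_pi_div_two_of_mod_four_eq_three {n : ℕ} (h : n % 4 = 3) :
    sin (n * (π / 2)) = -1 := by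
  obtain ⟨j, rfl⟩ : ∃ j, n = 4 * j + 3 := ⟨n / 4, by omega⟩
  rw [show ((4 * j + 3 : ℕ) : ℝ) * (π / 2) = -(π / 2) + (j + 1 : ℕ) * (2 * π) by push_cast; ring,
    sin_add_nat_mul_two_pi, sin_neg, sin_pi_div_two]

theorem I_sign_general (n k : ℕ) :
    (n % 4 = 1 → 0 < I n k) ∧ (n % 4 = 3 → I n k < 0) := by
  have key (hcos : cos (n * (π / 2)) = 0) : 0 < sin (n * (π / 2)) * I n k :=
    pos_sin_mul_integral_pow_succ_mul_sin (by positivity) hcos (2 * k)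
  refine ⟨fun h => ?_, fun h => ?_⟩
  · have hsin := sin_natCast_mul_pi_div_two_of_mod_four_eq_one h
    simpa [hsin] using key (cos_eq_zero_iff_sin_eq.mpr (.inl hsin))
  · have hsin := sin_natCast_mul_pi_div_two_of_mod_four_eq_three h
    simpa [hsin] using key (cos_eq_zero_iff_sin_eq.mpr (.inr hsin))

/-- For every `k ≥ 0` and odd `n ≥ 1`: `I_{n,k} > 0` if `n ≡ 1 (mod 4)`
and `I_{n,k} < 0` if `n ≡ 3 (mod 4)`. -/
theorem I_sign (n k : ℕ) (hn : 1 ≤ n) (hno : Odd n) :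
    (n % 4 = 1 → 0 < I n k) ∧ (n % 4 = 3 → I n k < 0) :=
  I_sign_general n k
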